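/- arXiv:1707.03945 — 6 statements merged into one kernel-verified Lean document; each statement's English description precedes it below -/
import Mathlib

section
/- Let α > 2, let n be a positive integer, let U : Fin n → ℝ with U i > 0 for all i, and let τ : Fin n → ℕ. Then 2 · ∫_0^∞ (1 − ∏_{i} (1 + U i · r^(−α))^(−τ i)) · r dr = Σ_{κ} (τ κ) · α · (U κ) · ∫_0^∞ r^(1−α) · ∏_{i} (1 + U i · r^(−α))^(−(τ i) − δ_{iκ}) dr, where δ_{iκ} equals 1 if i = κ and 0 otherwise, and the outer sum runs over κ ∈ Fin n. -/
open MeasureTheory Real Set Filter Topology Asymptotics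

/-!
Integrate by parts against `d(r²/2)`: with `F r = ∏ i, (1 + U i * r ^ (-α)) ^ (-τ i)`, the
boundary term `r² (1 - F r)` vanishes at `0⁺` because `0 ≤ 1 - F ≤ 1`, and at `∞` because
`F r = φ (r ^ (-α))` for a function `φ` differentiable at `0` with `φ 0 = 1`, so that
`1 - F r = O(r ^ (-α))` and `α > 2`. Differentiating the product factor by factor lowers the
exponent of the `κ`-th factor by one, which produces the `κ`-th summand.
-/

theorem integrableOn_Ioi_zero_of_bounded_of_isBigO_rpow {f : ℝ → ℝ} {M p : ℝ}
    (hf : ContinuousOn f (Ioi 0)) (h0 : ∀ r ∈ Ioc 0 1, ‖f r‖ ≤ M) (hp : p < -1)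
    (hinf : f =O[atTop] (· ^ p)) : IntegrableOn f (Ioi 0) := by
  rw [← Ioc_union_Ici_eq_Ioi zero_lt_one]
  refine IntegrableOn.union ?_ ?_
  · refine IntegrableOn.of_bound measure_Ioc_lt_top
      ((hf.mono Ioc_subset_Ioi_self).aestronglyMeasurable measurableSet_Ioc) M ?_
    exact (ae_restrict_iff' measurableSet_Ioc).2 (Eventually.of_forall h0)
  · exact ((hf.mono (Ici_subset_Ioi.2 zero_lt_one)).locallyIntegrableOn measurableSet_Ici
      ).integrableOn_of_isBigO_atTop hinf
      ⟨Ioi 1, Ioi_mem_atTop 1, integrableOn_Ioi_rpow_of_lt hp zero_lt_one⟩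

theorem two_mul_integral_mul_self_eq_neg_integral_sq_mul_deriv {v v' : ℝ → ℝ}
    (hv : ∀ r ∈ Ioi 0, HasDerivAt v (v' r) r) (hv_int : IntegrableOn (fun r => v r * r) (Ioi 0))
    (hv'_int : IntegrableOn (fun r => r ^ 2 * v' r) (Ioi 0))
    (h0 : Tendsto (fun r => r ^ 2 * v r) (𝓝[>] 0) (𝓝 0))
    (hinf : Tendsto (fun r => r ^ 2 * v r) atTop (𝓝 0)) :
    2 * ∫ r in Ioi 0, v r * r = -∫ r in Ioi 0, r ^ 2 * v' r := by
  have hsq : ∀ r ∈ Ioi (0 : ℝ), HasDerivAt (fun r => r ^ 2) (2 * r) r := fun r _ => by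
    simpa using hasDerivAt_pow 2 r
  rw [integral_Ioi_mul_deriv_eq_deriv_mul hsq hv hv'_int
    (IntegrableOn.congr_fun (hv_int.const_mul 2) (fun r _ => by simp only [Pi.mul_apply]; ring)
      measurableSet_Ioi) h0 hinf, ← integral_const_mul]
  simp only [sub_zero, zero_sub, neg_neg]
  exact integral_congr_ae (Eventually.of_forall fun r => by ring)

section

variable {ι : Type*} [Fintype ι] (α : ℝ) (U : ι → ℝ) (e : ι → ℝ)

/-- The theorem concerns `e = -τ` and its shifts `e - Pi.single κ 1`, whose `i`-th entry is
`-τ i - δ i κ`. -/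
noncomputable def radialProd (r : ℝ) : ℝ := ∏ i, (1 + U i * r ^ (-α)) ^ e i

variable {α U e}

lemma one_le_one_add_mul_rpow {u r : ℝ} (hu : 0 ≤ u) (hr : 0 ≤ r) : 1 ≤ 1 + u * r ^ (-α) :=
  le_add_of_nonneg_right (mul_nonneg hu (rpow_nonneg hr _))

lemma radialProd_nonneg (hU : ∀ i, 0 ≤ U i) {r : ℝ} (hr : 0 ≤ r) : 0 ≤ radialProd α U e r :=
  Finset.prod_nonneg fun i _ => rpow_nonneg (zero_le_one.trans (one_le_one_add_mul_rpow (hU i) hr)) _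

lemma radialProd_le_one (hU : ∀ i, 0 ≤ U i) (he : ∀ i, e i ≤ 0) {r : ℝ} (hr : 0 ≤ r) :
    radialProd α U e r ≤ 1 :=
  Finset.prod_le_one
    (fun i _ => rpow_nonneg (zero_le_one.trans (one_le_one_add_mul_rpow (hU i) hr)) _)
    fun i _ => rpow_le_one_of_one_le_of_nonpos (one_le_one_add_mul_rpow (hU i) hr) (he i)

lemma radialProd_eq_mul_prod_erase [DecidableEq ι] (κ : ι) (r : ℝ) :
    radialProd α U e r =
      (1 + U κ * r ^ (-α)) ^ e κ * ∏ i ∈ Finset.univ.erase κ, (1 + U i * r ^ (-α)) ^ e i :=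
  (Finset.mul_prod_erase _ _ (Finset.mem_univ κ)).symm

lemma radialProd_sub_single [DecidableEq ι] (κ : ι) (r : ℝ) :
    radialProd α U (e - Pi.single κ 1) r =
      (1 + U κ * r ^ (-α)) ^ (e κ - 1) * ∏ i ∈ Finset.univ.erase κ, (1 + U i * r ^ (-α)) ^ e i := by
  rw [radialProd_eq_mul_prod_erase κ]
  congr 1
  · simp
  · refine Finset.prod_congr rfl fun i hi => ?_
    simp [Pi.single_eq_of_ne (Finset.ne_of_mem_erase hi)]

lemma radialProd_le_rpow_div (hU : ∀ i, 0 ≤ U i) (he : ∀ i, e i ≤ 0) {κ : ι} (hκ : e κ ≤ -1)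
    (hUκ : 0 < U κ) {r : ℝ} (hr : 0 < r) : radialProd α U e r ≤ r ^ α / U κ := by
  classical
  have hb := one_le_one_add_mul_rpow (α := α) (hU κ) hr.le
  have hrest : ∏ i ∈ Finset.univ.erase κ, (1 + U i * r ^ (-α)) ^ e i ≤ 1 :=
    Finset.prod_le_one
      (fun i _ => rpow_nonneg (zero_le_one.trans (one_le_one_add_mul_rpow (hU i) hr.le)) _)
      fun i _ => rpow_le_one_of_one_le_of_nonpos (one_le_one_add_mul_rpow (hU i) hr.le) (he i)
  calc radialProd α U e r ≤ (1 + U κ * r ^ (-α)) ^ e κ := by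
        rw [radialProd_eq_mul_prod_erase κ]
        exact mul_le_of_le_one_right (rpow_nonneg (zero_le_one.trans hb) _) hrest
    _ ≤ (1 + U κ * r ^ (-α)) ^ (-1 : ℝ) := rpow_le_rpow_of_exponent_le hb hκ
    _ ≤ (U κ * r ^ (-α))⁻¹ := by
        rw [rpow_neg_one]
        exact inv_anti₀ (by positivity) (by linarith)
    _ = r ^ α / U κ := by rw [mul_inv, rpow_neg hr.le, inv_inv, div_eq_inv_mul]

lemma hasDerivAt_radialProd [DecidableEq ι] (hU : ∀ i, 0 ≤ U i) {r : ℝ} (hr : 0 < r) :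
    HasDerivAt (radialProd α U e)
      (∑ κ, -α * e κ * U κ * r ^ (-α - 1) * radialProd α U (e - Pi.single κ 1) r) r := by
  have hfactor (i : ι) : HasDerivAt (fun s => (1 + U i * s ^ (-α)) ^ e i)
      (U i * (-α * r ^ (-α - 1)) * e i * (1 + U i * r ^ (-α)) ^ (e i - 1)) r :=
    (((hasDerivAt_rpow_const (Or.inl hr.ne')).const_mul (U i)).const_add 1).rpow_const
      (Or.inl (zero_lt_one.trans_le (one_le_one_add_mul_rpow (hU i) hr.le)).ne')
  refine (HasDerivAt.fun_finsetProd fun i _ => hfactor i).congr_deriv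
    (Finset.sum_congr rfl fun κ _ => ?_)
  rw [radialProd_sub_single, smul_eq_mul]
  ring

lemma one_sub_radialProd_isBigO (hα : 0 < α) :
    (fun r => 1 - radialProd α U e r) =O[atTop] (· ^ (-α)) := by
  -- `radialProd α U e r = φ (r ^ (-α))`, and `φ` is differentiable at `0`, where every base is `1`.
  have hφ : DifferentiableAt ℝ (fun s => ∏ i, (1 + U i * s) ^ e i) 0 := by
    refine DifferentiableAt.fun_finsetProd fun i _ => ?_
    exact (by fun_prop : DifferentiableAt ℝ (fun s => 1 + U i * s) 0).rpow_const (by simp)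
  have := (hφ.isBigO_sub.comp_tendsto (tendsto_rpow_neg_atTop hα)).neg_left
  simpa [radialProd, Function.comp_def] using this

lemma continuousOn_radialProd (hU : ∀ i, 0 ≤ U i) : ContinuousOn (radialProd α U e) (Ioi 0) := by
  classical
  exact fun r hr => (hasDerivAt_radialProd hU hr).continuousAt.continuousWithinAt

lemma integrableOn_one_sub_radialProd_mul_self (hα : 2 < α) (hU : ∀ i, 0 ≤ U i)
    (he : ∀ i, e i ≤ 0) : IntegrableOn (fun r => (1 - radialProd α U e r) * r) (Ioi 0) := by
  refine integrableOn_Ioi_zero_of_bounded_of_isBigO_rpow (M := 1) (p := 1 - α)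
    ((continuousOn_const.sub (continuousOn_radialProd hU)).mul continuousOn_id) ?_ (by linarith) ?_
  · rintro r ⟨hr0, hr1⟩
    rw [norm_mul, Real.norm_of_nonneg (sub_nonneg.2 (radialProd_le_one hU he hr0.le)),
      Real.norm_of_nonneg hr0.le]
    nlinarith [radialProd_nonneg (α := α) (e := e) hU hr0.le]
  · refine ((one_sub_radialProd_isBigO (by linarith)).mul (isBigO_refl (fun r : ℝ => r) _)).congr'
      EventuallyEq.rfl ?_
    filter_upwards [eventually_gt_atTop 0] with r hr
    rw [sub_eq_neg_add, rpow_add hr, rpow_one]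

lemma integrableOn_rpow_mul_radialProd (hα : 2 < α) (hU : ∀ i, 0 ≤ U i) (he : ∀ i, e i ≤ 0)
    {κ : ι} (hκ : e κ ≤ -1) (hUκ : 0 < U κ) :
    IntegrableOn (fun r => r ^ (1 - α) * radialProd α U e r) (Ioi 0) := by
  refine integrableOn_Ioi_zero_of_bounded_of_isBigO_rpow (M := 1 / U κ) (p := 1 - α)
    ((continuousOn_id.rpow_const fun r hr => Or.inl (ne_of_gt hr)).mul
      (continuousOn_radialProd hU)) ?_ (by linarith) ?_
  · rintro r ⟨hr0, hr1⟩
    have hP := radialProd_le_rpow_div (α := α) hU he hκ hUκ hr0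
    rw [norm_mul, Real.norm_of_nonneg (rpow_nonneg hr0.le _),
      Real.norm_of_nonneg (radialProd_nonneg hU hr0.le)]
    calc r ^ (1 - α) * radialProd α U e r ≤ r ^ (1 - α) * (r ^ α / U κ) :=
          mul_le_mul_of_nonneg_left hP (rpow_nonneg hr0.le _)
      _ = r / U κ := by rw [mul_div_assoc', ← rpow_add hr0, sub_add_cancel, rpow_one]
      _ ≤ 1 / U κ := by gcongr
  · refine IsBigO.of_bound 1 ?_
    filter_upwards [eventually_gt_atTop 0] with r hr
    rw [norm_mul, one_mul]
    exact mul_le_of_le_one_right (norm_nonneg _) <| by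
      rw [Real.norm_of_nonneg (radialProd_nonneg hU hr.le)]
      exact radialProd_le_one hU he hr.le

lemma tendsto_sq_mul_one_sub_radialProd_atTop (hα : 2 < α) :
    Tendsto (fun r => r ^ 2 * (1 - radialProd α U e r)) atTop (𝓝 0) := by
  refine ((isBigO_refl (fun r : ℝ => r ^ 2) _).mul (one_sub_radialProd_isBigO (by linarith))
    ).trans_tendsto ?_
  refine (tendsto_rpow_neg_atTop (by linarith : 0 < α - 2)).congr' ?_
  filter_upwards [eventually_gt_atTop 0] with r hr
  rw [neg_sub, sub_eq_add_neg, rpow_add hr, rpow_two]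

lemma tendsto_sq_mul_one_sub_radialProd_nhdsGT (hU : ∀ i, 0 ≤ U i) (he : ∀ i, e i ≤ 0) :
    Tendsto (fun r => r ^ 2 * (1 - radialProd α U e r)) (𝓝[>] 0) (𝓝 0) := by
  have hsq : Tendsto (fun r : ℝ => r ^ 2) (𝓝[>] 0) (𝓝 0) := by
    simpa using ((continuous_pow 2).tendsto (0 : ℝ)).mono_left nhdsWithin_le_nhds
  refine (IsBigO.of_bound 1 ?_).trans_tendsto hsq
  filter_upwards [self_mem_nhdsWithin] with r (hr : 0 < r)
  rw [norm_mul, one_mul]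
  refine mul_le_of_le_one_right (norm_nonneg _) ?_
  rw [Real.norm_of_nonneg (sub_nonneg.2 (radialProd_le_one hU he hr.le))]
  linarith [radialProd_nonneg (α := α) (e := e) hU hr.le]

theorem two_mul_integral_one_sub_radialProd_mul_self [DecidableEq ι] (hα : 2 < α)
    (hU : ∀ i, 0 < U i) (he : ∀ i, e i ≤ 0) :
    2 * ∫ r in Ioi 0, (1 - radialProd α U e r) * r =
      ∑ κ, -e κ * α * U κ * ∫ r in Ioi 0, r ^ (1 - α) * radialProd α U (e - Pi.single κ 1) r := by
  set G := fun κ r => r ^ (1 - α) * radialProd α U (e - Pi.single κ 1) r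
  have hU' : ∀ i, 0 ≤ U i := fun i => (hU i).le
  have hG (κ : ι) : IntegrableOn (G κ) (Ioi 0) := by
    refine integrableOn_rpow_mul_radialProd hα hU' (fun i => ?_) (by simpa using he κ) (hU κ)
    simp only [Pi.sub_apply, Pi.single_apply]
    split_ifs <;> linarith [he i]
  have hsq_mul_deriv : EqOn
      (fun r => r ^ 2 * -∑ κ, -α * e κ * U κ * r ^ (-α - 1) * radialProd α U (e - Pi.single κ 1) r)
      (fun r => ∑ κ, α * e κ * U κ * G κ r) (Ioi 0) := by
    intro r hr
    simp only [G, Finset.mul_sum, ← Finset.sum_neg_distrib]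
    refine Finset.sum_congr rfl fun κ _ => ?_
    rw [show (1 - α) = 2 + (-α - 1) by ring, rpow_add hr, rpow_two]
    ring
  rw [two_mul_integral_mul_self_eq_neg_integral_sq_mul_deriv
      (fun r hr => (hasDerivAt_radialProd hU' hr).const_sub 1)
      (integrableOn_one_sub_radialProd_mul_self hα hU' he)
      (IntegrableOn.congr_fun (integrable_finsetSum _ fun κ _ => (hG κ).const_mul _)
        hsq_mul_deriv.symm measurableSet_Ioi)
      (tendsto_sq_mul_one_sub_radialProd_nhdsGT hU' he)
      (tendsto_sq_mul_one_sub_radialProd_atTop hα),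
    setIntegral_congr_fun measurableSet_Ioi hsq_mul_deriv,
    integral_finsetSum _ fun κ _ => (hG κ).const_mul _, ← Finset.sum_neg_distrib]
  exact Finset.sum_congr rfl fun κ _ => by rw [integral_const_mul]; ring

end

theorem stmt_1_general (α : ℝ) (hα : 2 < α) (n : ℕ)
    (U : Fin n → ℝ) (hU : ∀ i, 0 < U i) (τ : Fin n → ℕ) :
    2 * (∫ r in Set.Ioi (0 : ℝ),
        (1 - ∏ i, (1 + U i * r ^ (-α)) ^ (-(τ i : ℝ))) * r) =
      ∑ κ : Fin n, (τ κ : ℝ) * α * U κ *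
        ∫ r in Set.Ioi (0 : ℝ),
          r ^ (1 - α) *
            ∏ i, (1 + U i * r ^ (-α)) ^
              (-(τ i : ℝ) - if i = κ then 1 else 0) := by
  have := two_mul_integral_one_sub_radialProd_mul_self (e := fun i => -(τ i : ℝ)) hα hU
    (fun i => by simp)
  simpa [radialProd, Pi.single_apply] using this

theorem stmt_1 (α : ℝ) (hα : 2 < α) (n : ℕ) (hn : 0 < n)
    (U : Fin n → ℝ) (hU : ∀ i, 0 < U i) (τ : Fin n → ℕ) :
    2 * (∫ r in Set.Ioi (0 : ℝ),
        (1 - ∏ i, (1 + U i * r ^ (-α)) ^ (-(τ i : ℝ))) * r) =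
      ∑ κ : Fin n, (τ κ : ℝ) * α * U κ *
        ∫ r in Set.Ioi (0 : ℝ),
          r ^ (1 - α) *
            ∏ i, (1 + U i * r ^ (-α)) ^
              (-(τ i : ℝ) - if i = κ then 1 else 0) :=
  stmt_1_general α hα n U hU τ
end

section
/- Let α > 2, let n be a positive integer, let U : Fin n → ℝ with U i > 0 for all i, let τ : Fin n → ℕ, and fix κ ∈ Fin n. Let μ ∈ Fin n be an index such that U μ = max_{i} U i. Then ∫_0^∞ s^(T + 2/α − 1) · ∏_{i} (s + U i)^(−(τ i) − δ_{iκ}) ds = (U μ)^(2/α − 1) · ∫_0^1 z^(−2/α) · (1 − z)^(T + 2/α − 1) · ∏_{i ≠ μ} (1 − (1 − (U i)/(U μ)) · z)^(−(τ i) − δ_{iκ}) dz, where T = Σ_{i} τ i and δ_{iκ} equals 1 if i = κ and 0 otherwise. -/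
/-! The substitution `s = a / z - a` with `a = U μ` maps `(0, 1)` onto `(0, ∞)` with
`ds = a / z² dz`, and turns each factor `s + U i` into `a (1 - (1 - U i / a) z) / z`. The powers
of `a` and `z` collected from all factors have exponents `2/α - 1` and `-2/α` because the exponents
of the integrand sum to `2/α - 2`, and the factor `i = μ` becomes `1`. -/

open MeasureTheory Real Set

lemma image_div_sub_Ioo {a : ℝ} (ha : 0 < a) : (fun z => a / z - a) '' Ioo 0 1 = Ioi 0 := by
  ext s
  constructor
  · rintro ⟨z, ⟨hz0, hz1⟩, rfl⟩
    have : a < a / z := by rw [lt_div_iff₀ hz0]; nlinarith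
    exact sub_pos.mpr this
  · intro (hs : 0 < s)
    refine ⟨a / (s + a), ⟨by positivity, (div_lt_one (by linarith)).mpr (by linarith)⟩, ?_⟩
    field_simp
    ring

lemma integral_Ioi_eq_integral_Ioo_div_sub {E : Type*} [NormedAddCommGroup E] [NormedSpace ℝ E]
    {a : ℝ} (ha : 0 < a) (f : ℝ → E) :
    ∫ s in Ioi 0, f s = ∫ z in Ioo 0 1, (a / z ^ 2) • f (a / z - a) := by
  have hinj : InjOn (fun z => a / z - a) (Ioo 0 1) := by
    rintro z₁ ⟨hz₁, -⟩ z₂ ⟨hz₂, -⟩ h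
    simp only [sub_left_inj] at h
    field_simp at h
    linarith
  have hderiv : ∀ z ∈ Ioo (0 : ℝ) 1,
      HasDerivWithinAt (fun z => a / z - a) (-(a / z ^ 2)) (Ioo 0 1) z := by
    rintro z ⟨hz, -⟩
    have := ((hasDerivAt_inv hz.ne').const_mul a).sub_const a
    simp only [mul_neg, ← div_eq_mul_inv] at this
    exact this.hasDerivWithinAt
  rw [← image_div_sub_Ioo ha,
    integral_image_eq_integral_abs_deriv_smul measurableSet_Ioo hderiv hinj]
  refine setIntegral_congr_fun measurableSet_Ioo fun z hz => ?_
  rw [abs_neg, abs_of_pos (div_pos ha (pow_pos hz.1 2))]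

lemma div_sub_add_eq {a z : ℝ} (ha : a ≠ 0) (hz : z ≠ 0) (b : ℝ) :
    a / z - a + b = a * (1 - (1 - b / a) * z) / z := by
  field_simp
  ring

lemma one_sub_one_sub_mul_pos {r z : ℝ} (hr : 0 < r) (hz : z ∈ Ioo (0 : ℝ) 1) :
    0 < 1 - (1 - r) * z := by
  nlinarith [hz.1, hz.2]

lemma mul_div_rpow {a x z : ℝ} (ha : 0 ≤ a) (hx : 0 ≤ x) (hz : 0 < z) (p : ℝ) :
    (a * x / z) ^ p = a ^ p * z ^ (-p) * x ^ p := by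
  rw [div_rpow (by positivity) hz.le, mul_rpow ha hx, rpow_neg hz.le]
  ring

lemma prod_mul_div_rpow {ι : Type*} (s : Finset ι) {a z : ℝ} (ha : 0 < a) (hz : 0 < z)
    {x : ι → ℝ} (hx : ∀ i ∈ s, 0 ≤ x i) (e : ι → ℝ) :
    ∏ i ∈ s, (a * x i / z) ^ e i =
      a ^ (∑ i ∈ s, e i) * z ^ (-∑ i ∈ s, e i) * ∏ i ∈ s, x i ^ e i := by
  rw [Finset.prod_congr rfl fun i hi => mul_div_rpow ha.le (hx i hi) hz (e i),
    Finset.prod_mul_distrib, Finset.prod_mul_distrib, rpow_sum_of_pos ha, ← Finset.sum_neg_distrib,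
    rpow_sum_of_pos hz]

lemma div_sq_mul_rpow_mul_prod_rpow {ι : Type*} (s : Finset ι) {a z : ℝ} (ha : 0 < a)
    (hz : z ∈ Ioo (0 : ℝ) 1) {b : ι → ℝ} (hb : ∀ i ∈ s, 0 < b i) {c d : ℝ} {e : ι → ℝ}
    (hde : d + ∑ i ∈ s, e i = c - 2) :
    a / z ^ 2 * ((a / z - a) ^ d * ∏ i ∈ s, (a / z - a + b i) ^ e i) =
      a ^ (c - 1) * (z ^ (-c) * (1 - z) ^ d * ∏ i ∈ s, (1 - (1 - b i / a) * z) ^ e i) := by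
  have hz0 := hz.1
  have hsub : a / z - a = a * (1 - z) / z := by field_simp
  simp_rw [div_sub_add_eq ha.ne' hz0.ne']
  rw [prod_mul_div_rpow s ha hz0
      (fun i hi => (one_sub_one_sub_mul_pos (div_pos (hb i hi) ha) hz).le),
    hsub, mul_div_rpow ha.le (sub_pos.mpr hz.2).le hz0]
  have hac : a ^ (c - 1) = a * (a ^ d * a ^ (∑ i ∈ s, e i)) := by
    rw [← rpow_add ha, show c - 1 = 1 + (d + ∑ i ∈ s, e i) by linarith, rpow_add ha, rpow_one]
  have hzc : z ^ (-c) = (z ^ 2)⁻¹ * (z ^ (-d) * z ^ (-∑ i ∈ s, e i)) := by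
    rw [← rpow_add hz0, show -c = -2 + (-d + -∑ i ∈ s, e i) by linarith, rpow_add hz0,
      rpow_neg hz0.le, rpow_two]
  rw [hac, hzc, div_eq_mul_inv]
  ring

lemma sum_neg_sub_ite_eq {ι : Type*} [Fintype ι] [DecidableEq ι] (t : ι → ℝ) (κ : ι) :
    ∑ i, (-t i - if i = κ then 1 else 0) = -∑ i, t i - 1 := by
  rw [Finset.sum_sub_distrib, Finset.sum_neg_distrib, Finset.sum_ite_eq' Finset.univ κ,
    if_pos (Finset.mem_univ κ)]

theorem stmt_3_general (α : ℝ) (n : ℕ)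
    (U : Fin n → ℝ) (hU : ∀ i, 0 < U i) (τ : Fin n → ℕ) (κ : Fin n)
    (μ : Fin n) :
    (∫ s in Set.Ioi (0 : ℝ),
        s ^ ((∑ i, (τ i : ℝ)) + 2 / α - 1) *
          ∏ i, (s + U i) ^ (-(τ i : ℝ) - if i = κ then 1 else 0)) =
      U μ ^ (2 / α - 1) *
        ∫ z in Set.Ioo (0 : ℝ) 1,
          z ^ (-(2 / α)) * (1 - z) ^ ((∑ i, (τ i : ℝ)) + 2 / α - 1) *
            ∏ i ∈ Finset.univ.erase μ,
              (1 - (1 - U i / U μ) * z) ^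
                (-(τ i : ℝ) - if i = κ then 1 else 0) := by
  have hUμ := hU μ
  rw [integral_Ioi_eq_integral_Ioo_div_sub hUμ, ← integral_const_mul]
  refine setIntegral_congr_fun measurableSet_Ioo fun z hz => ?_
  have hexp : (∑ i, (τ i : ℝ)) + 2 / α - 1 + ∑ i, (-(τ i : ℝ) - if i = κ then 1 else 0) =
      2 / α - 2 := by
    rw [sum_neg_sub_ite_eq]
    ring
  rw [smul_eq_mul, div_sq_mul_rpow_mul_prod_rpow Finset.univ hUμ hz (fun i _ => hU i) hexp,
    Finset.prod_erase _ (by rw [div_self hUμ.ne', sub_self, zero_mul, sub_zero, one_rpow])]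

theorem stmt_3 (α : ℝ) (hα : 2 < α) (n : ℕ) (hn : 0 < n)
    (U : Fin n → ℝ) (hU : ∀ i, 0 < U i) (τ : Fin n → ℕ) (κ : Fin n)
    (μ : Fin n) (hμ : ∀ i, U i ≤ U μ) :
    (∫ s in Set.Ioi (0 : ℝ),
        s ^ ((∑ i, (τ i : ℝ)) + 2 / α - 1) *
          ∏ i, (s + U i) ^ (-(τ i : ℝ) - if i = κ then 1 else 0)) =
      U μ ^ (2 / α - 1) *
        ∫ z in Set.Ioo (0 : ℝ) 1,
          z ^ (-(2 / α)) * (1 - z) ^ ((∑ i, (τ i : ℝ)) + 2 / α - 1) *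
            ∏ i ∈ Finset.univ.erase μ,
              (1 - (1 - U i / U μ) * z) ^
                (-(τ i : ℝ) - if i = κ then 1 else 0) :=
  stmt_3_general α n U hU τ κ μ
end

section
/- Let α > 2, let n be a positive integer, let U : Fin n → ℝ with U i > 0 for all i, and let τ : Fin n → ℕ. Let μ ∈ Fin n be an index such that U μ = max_{i} U i, and set T = Σ_{i} τ i. Then ∫_{ℝ²} (1 − ∏_{i} (1 + U i · ‖u‖^(−α))^(−τ i)) du = π · Σ_{κ} (τ κ) · (U κ) · (U μ)^(2/α − 1) · ∫_0^1 z^(−2/α) · (1 − z)^(T + 2/α − 1) · ∏_{i ≠ μ} (1 − (1 − (U i)/(U μ)) · z)^(−(τ i) − δ_{iκ}) dz, where the outer sum runs over κ ∈ Fin n, δ_{iκ} equals 1 if i = κ and 0 otherwise, and the left-hand side is a Lebesgue integral over the plane. -/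
/-!
With `P(s) = ∏ᵢ (1 + Uᵢ s) ^ (-τᵢ)`, polar coordinates and the substitution `s = r ^ (-α)` turn
the integral into `(2π / α) ∫₀^∞ s ^ (-2/α - 1) (1 - P s) ds`. Integrating by parts against
`s ^ (-2/α)` (the boundary terms vanish since `1 - P s = O(s)` at `0` and `P` is bounded) gives
`π ∑_κ τ_κ U_κ ∫₀^∞ s ^ (-2/α) P(s) (1 + U_κ s)⁻¹ ds`, because `-P'` is that sum of products with
one exponent lowered by one. Finally `s = z / (U_μ (1 - z))` maps `(0, 1)` onto `(0, ∞)` and turns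
`1 + Uᵢ s` into `(1 - (1 - Uᵢ / U_μ) z) / (1 - z)`, whose numerator is `1` for `i = μ`; collecting
the powers of `z`, `1 - z` and `U_μ` gives the Beta-type integrals.
-/

open MeasureTheory Real Set Filter Topology

theorem integral_fun_norm_euclideanSpace_fin_two (f : ℝ → ℝ) :
    ∫ u : EuclideanSpace ℝ (Fin 2), f ‖u‖ = 2 * π * ∫ r in Ioi (0 : ℝ), r * f r := by
  rw [integral_fun_norm_addHaar, finrank_euclideanSpace_fin, measureReal_def,
    EuclideanSpace.volume_ball_fin_two]
  simp [pi_nonneg]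
  ring

theorem integral_Ioi_mul_comp_rpow_neg {α : ℝ} (hα : 0 < α) (g : ℝ → ℝ) :
    ∫ r in Ioi (0 : ℝ), r * g (r ^ (-α)) =
      α⁻¹ * ∫ s in Ioi (0 : ℝ), s ^ (-(2 / α) - 1) * g s := by
  rw [← integral_comp_rpow_Ioi (fun s => s ^ (-(2 / α) - 1) * g s) (neg_ne_zero.mpr hα.ne'),
    ← integral_const_mul]
  refine setIntegral_congr_fun measurableSet_Ioi fun r (hr : 0 < r) => ?_
  have hexp : r ^ (-α - 1) * (r ^ (-α)) ^ (-(2 / α) - 1) = r := by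
    rw [← rpow_mul hr.le, ← rpow_add hr]
    convert rpow_one r using 2
    field_simp
    ring
  rw [smul_eq_mul, abs_neg, abs_of_pos hα, mul_assoc, inv_mul_cancel_left₀ hα.ne', ← mul_assoc,
    hexp]

theorem integral_Ioi_eq_integral_Ioo_comp_div_mul_one_sub {c : ℝ} (hc : 0 < c) (f : ℝ → ℝ) :
    ∫ s in Ioi (0 : ℝ), f s =
      ∫ z in Ioo (0 : ℝ) 1, (c * (1 - z) ^ 2)⁻¹ * f (z / (c * (1 - z))) := by
  have himage : (fun z => z / (c * (1 - z))) '' Ioo 0 1 = Ioi 0 := by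
    ext s
    refine ⟨?_, fun (hs : 0 < s) => ⟨c * s / (1 + c * s), ⟨by positivity, ?_⟩, ?_⟩⟩
    · rintro ⟨z, ⟨hz₀, hz₁⟩, rfl⟩
      exact div_pos hz₀ (mul_pos hc (sub_pos.mpr hz₁))
    · rw [div_lt_one (by positivity)]
      linarith
    · field_simp
      ring
  have hderiv : ∀ z ∈ Ioo (0 : ℝ) 1,
      HasDerivWithinAt (fun z => z / (c * (1 - z))) (c * (1 - z) ^ 2)⁻¹ (Ioo 0 1) z := by
    rintro z ⟨-, hz₁⟩
    have hz : c * (1 - z) ≠ 0 := (mul_pos hc (sub_pos.mpr hz₁)).ne'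
    refine (((hasDerivAt_id' z).div (((hasDerivAt_id' z).const_sub 1).const_mul c) hz
      ).hasDerivWithinAt).congr_deriv ?_
    field_simp
    ring
  have hinj : InjOn (fun z => z / (c * (1 - z))) (Ioo 0 1) := by
    rintro x ⟨-, hx₁⟩ y ⟨-, hy₁⟩ h
    rw [div_eq_div_iff (by nlinarith) (by nlinarith)] at h
    nlinarith
  rw [← himage, integral_image_eq_integral_abs_deriv_smul measurableSet_Ioo hderiv hinj]
  refine setIntegral_congr_fun measurableSet_Ioo fun z _ => ?_
  rw [smul_eq_mul, abs_of_nonneg (by positivity)]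

theorem integrableOn_Ioi_of_rpow_bounds {f : ℝ → ℝ} {p q C₀ C₁ : ℝ} (hp : -1 < p)
    (hq : q < -1) (hf : ContinuousOn f (Ioi 0)) (h₀ : ∀ s ∈ Ioc (0 : ℝ) 1, |f s| ≤ C₀ * s ^ p)
    (h₁ : ∀ s ∈ Ioi (1 : ℝ), |f s| ≤ C₁ * s ^ q) : IntegrableOn f (Ioi 0) := by
  rw [← Ioc_union_Ioi_eq_Ioi zero_le_one]
  refine IntegrableOn.union ?_ ?_
  · have hint : IntegrableOn (fun s => C₀ * s ^ p) (Ioc (0 : ℝ) 1) :=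
      ((intervalIntegral.intervalIntegrable_rpow' hp).1).const_mul C₀
    exact hint.mono' ((hf.mono Ioc_subset_Ioi_self).aestronglyMeasurable measurableSet_Ioc)
      ((ae_restrict_iff' measurableSet_Ioc).mpr (Eventually.of_forall h₀))
  · have hint : IntegrableOn (fun s => C₁ * s ^ q) (Ioi (1 : ℝ)) :=
      (integrableOn_Ioi_rpow_of_lt hq one_pos).const_mul C₁
    exact hint.mono' ((hf.mono (Ioi_subset_Ioi zero_le_one)).aestronglyMeasurable
      measurableSet_Ioi) ((ae_restrict_iff' measurableSet_Ioi).mpr (Eventually.of_forall h₁))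

theorem abs_rpow_mul_le_mul_rpow {a B s x : ℝ} (hs : 0 < s) (hx : |x| ≤ B) :
    |s ^ a * x| ≤ B * s ^ a := by
  rw [abs_mul, abs_of_pos (rpow_pos_of_pos hs a), mul_comm]
  exact mul_le_mul_of_nonneg_right hx (rpow_pos_of_pos hs a).le

theorem abs_rpow_mul_le_mul_rpow_add_one {a C s x : ℝ} (hs : 0 < s) (hx : |x| ≤ C * s) :
    |s ^ a * x| ≤ C * s ^ (a + 1) := by
  rw [rpow_add_one hs.ne', ← mul_assoc, mul_comm C, mul_assoc]
  exact (abs_rpow_mul_le_mul_rpow hs hx).trans_eq (mul_comm _ _)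

theorem integral_Ioi_rpow_mul_eq_of_hasDerivAt {β B C : ℝ} (hβ₀ : 0 < β) (hβ₁ : β < 1)
    {g g' : ℝ → ℝ} (hg : ∀ s ∈ Ioi (0 : ℝ), HasDerivAt g (g' s) s)
    (hgC : ∀ s ∈ Ioi (0 : ℝ), |g s| ≤ C * s) (hgB : ∀ s ∈ Ioi (0 : ℝ), |g s| ≤ B)
    (hg' : IntegrableOn (fun s => s ^ (-β) * g' s) (Ioi 0)) :
    ∫ s in Ioi (0 : ℝ), s ^ (-β - 1) * g s = β⁻¹ * ∫ s in Ioi (0 : ℝ), s ^ (-β) * g' s := by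
  have hint : IntegrableOn (fun s => s ^ (-β - 1) * g s) (Ioi 0) :=
    integrableOn_Ioi_of_rpow_bounds (by linarith : -1 < -β - 1 + 1) (by linarith : -β - 1 < -1)
      ((continuousOn_id.rpow_const fun s hs => Or.inl (ne_of_gt hs)).mul
        fun s hs => (hg s hs).continuousAt.continuousWithinAt)
      (fun s hs => abs_rpow_mul_le_mul_rpow_add_one hs.1 (hgC s hs.1))
      fun s (hs : 1 < s) => abs_rpow_mul_le_mul_rpow (by linarith) (hgB s (zero_lt_one.trans hs))
  have hderiv : ∀ s ∈ Ioi (0 : ℝ), HasDerivAt (fun s => s ^ (-β) * g s)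
      (-β * (s ^ (-β - 1) * g s) + s ^ (-β) * g' s) s := fun s hs =>
    ((hasDerivAt_rpow_const (Or.inl (ne_of_gt hs))).mul (hg s hs)).congr_deriv (by ring)
  have hzero : ContinuousWithinAt (fun s => s ^ (-β) * g s) (Ici 0) 0 := by
    rw [← continuousWithinAt_Ioi_iff_Ici, ContinuousWithinAt,
      zero_rpow (neg_ne_zero.mpr hβ₀.ne'), zero_mul]
    have hlim : Tendsto (fun s : ℝ => C * s ^ (-β + 1)) (𝓝[>] 0) (𝓝 0) := by
      have h := ((continuous_id.rpow_const (p := -β + 1) fun _ => Or.inr (by linarith)).const_mul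
        C).tendsto 0
      rw [id, zero_rpow (by linarith), mul_zero] at h
      exact h.mono_left nhdsWithin_le_nhds
    exact squeeze_zero_norm' (eventually_nhdsWithin_of_forall fun s hs =>
      abs_rpow_mul_le_mul_rpow_add_one hs (hgC s hs)) hlim
  have hinfty : Tendsto (fun s => s ^ (-β) * g s) atTop (𝓝 0) := by
    refine squeeze_zero_norm' ?_ ((tendsto_rpow_neg_atTop hβ₀).const_mul B |>.trans (by simp))
    filter_upwards [eventually_gt_atTop 0] with s hs
    exact abs_rpow_mul_le_mul_rpow hs (hgB s hs)
  have hftc := integral_Ioi_of_hasDerivAt_of_tendsto hzero hderiv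
    ((hint.const_mul (-β)).add hg') hinfty
  rw [integral_add (hint.const_mul _) hg', integral_const_mul,
    zero_rpow (neg_ne_zero.mpr hβ₀.ne'), zero_mul, sub_zero] at hftc
  field_simp
  linarith

theorem one_le_one_add_mul {u s : ℝ} (hu : 0 ≤ u) (hs : 0 ≤ s) : 1 ≤ 1 + u * s :=
  le_add_of_nonneg_right (mul_nonneg hu hs)

theorem one_add_mul_rpow_nonneg {u s : ℝ} (hu : 0 ≤ u) (hs : 0 ≤ s) (e : ℝ) :
    0 ≤ (1 + u * s) ^ e :=
  rpow_nonneg (zero_le_one.trans (one_le_one_add_mul hu hs)) e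

theorem one_add_mul_rpow_le_one {u s e : ℝ} (hu : 0 ≤ u) (hs : 0 ≤ s) (he : e ≤ 0) :
    (1 + u * s) ^ e ≤ 1 :=
  rpow_le_one_of_one_le_of_nonpos (one_le_one_add_mul hu hs) he

theorem one_add_mul_div_mul_one_sub {u c z : ℝ} (hc : c ≠ 0) (hz : z ≠ 1) :
    1 + u * (z / (c * (1 - z))) = (1 - (1 - u / c) * z) / (1 - z) := by
  have : 1 - z ≠ 0 := sub_ne_zero.mpr hz.symm
  field_simp
  ring

theorem sub_single_one_nonpos {ι : Type*} [DecidableEq ι] {e : ι → ℝ} (he : ∀ i, e i ≤ 0)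
    (κ i : ι) : (e - Pi.single κ 1 : ι → ℝ) i ≤ 0 := by
  simp only [Pi.sub_apply, Pi.single_apply]
  split_ifs <;> linarith [he i]

section PowProd

variable {ι : Type*} [Fintype ι]

noncomputable def powProd (U e : ι → ℝ) (s : ℝ) : ℝ := ∏ i, (1 + U i * s) ^ e i

variable {U e : ι → ℝ} {s : ℝ}

theorem powProd_zero : powProd U e 0 = 1 := by
  simp [powProd]

theorem powProd_nonneg (hU : ∀ i, 0 ≤ U i) (hs : 0 ≤ s) : 0 ≤ powProd U e s :=
  Finset.prod_nonneg fun i _ => one_add_mul_rpow_nonneg (hU i) hs _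

theorem powProd_le_one (hU : ∀ i, 0 ≤ U i) (he : ∀ i, e i ≤ 0) (hs : 0 ≤ s) :
    powProd U e s ≤ 1 :=
  Finset.prod_le_one (fun i _ => one_add_mul_rpow_nonneg (hU i) hs _)
    fun i _ => one_add_mul_rpow_le_one (hU i) hs (he i)

variable [DecidableEq ι]

theorem powProd_le_rpow (hU : ∀ i, 0 ≤ U i) (he : ∀ i, e i ≤ 0) (hs : 0 ≤ s) (κ : ι) :
    powProd U e s ≤ (1 + U κ * s) ^ e κ := by
  rw [powProd, ← Finset.mul_prod_erase _ _ (Finset.mem_univ κ)]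
  exact mul_le_of_le_one_right (one_add_mul_rpow_nonneg (hU κ) hs _)
    (Finset.prod_le_one (fun i _ => one_add_mul_rpow_nonneg (hU i) hs _)
      fun i _ => one_add_mul_rpow_le_one (hU i) hs (he i))

theorem hasDerivAt_powProd (hs : ∀ i, 1 + U i * s ≠ 0) :
    HasDerivAt (powProd U e) (∑ κ, e κ * U κ * powProd U (e - Pi.single κ 1) s) s := by
  have hfactor : ∀ i ∈ Finset.univ, HasDerivAt (fun t => (1 + U i * t) ^ e i)
      (U i * e i * (1 + U i * s) ^ (e i - 1)) s := fun i _ => by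
    simpa using (((hasDerivAt_id' s).const_mul (U i)).const_add 1).rpow_const (Or.inl (hs i))
  refine (HasDerivAt.fun_finsetProd hfactor).congr_deriv (Finset.sum_congr rfl fun κ _ => ?_)
  have hrest : ∀ j ∈ Finset.univ.erase κ,
      (1 + U j * s) ^ (e - Pi.single κ 1 : ι → ℝ) j = (1 + U j * s) ^ e j := fun j hj => by
    simp [Finset.ne_of_mem_erase hj]
  rw [powProd, ← Finset.mul_prod_erase _ _ (Finset.mem_univ κ), Finset.prod_congr rfl hrest,
    smul_eq_mul]
  simp only [Pi.sub_apply, Pi.single_eq_same]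
  ring

theorem hasDerivAt_powProd_of_nonneg (hU : ∀ i, 0 ≤ U i) (hs : 0 ≤ s) :
    HasDerivAt (powProd U e) (∑ κ, e κ * U κ * powProd U (e - Pi.single κ 1) s) s :=
  hasDerivAt_powProd fun i => (zero_lt_one.trans_le (one_le_one_add_mul (hU i) hs)).ne'

theorem one_sub_powProd_le (hU : ∀ i, 0 ≤ U i) (he : ∀ i, e i ≤ 0) (hs : 0 ≤ s) :
    1 - powProd U e s ≤ (∑ κ, -e κ * U κ) * s := by
  have hderiv : ∀ t ∈ Ici (0 : ℝ), HasDerivAt (fun t => 1 - powProd U e t)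
      (-∑ κ, e κ * U κ * powProd U (e - Pi.single κ 1) t) t := fun t ht =>
    (hasDerivAt_powProd_of_nonneg hU ht).const_sub 1
  have hbound : ∀ t ∈ interior (Ici (0 : ℝ)),
      deriv (fun t => 1 - powProd U e t) t ≤ ∑ κ, -e κ * U κ := by
    intro t ht
    rw [interior_Ici] at ht
    rw [(hderiv t (mem_Ioi.mp ht).le).deriv, ← Finset.sum_neg_distrib]
    refine Finset.sum_le_sum fun κ _ => ?_
    nlinarith [powProd_le_one hU (sub_single_one_nonpos he κ) (mem_Ioi.mp ht).le,
      mul_nonneg (neg_nonneg.mpr (he κ)) (hU κ)]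
  simpa [powProd_zero] using (convex_Ici 0).image_sub_le_mul_sub_of_deriv_le
    (fun t ht => (hderiv t ht).continuousAt.continuousWithinAt)
    (fun t ht => (hderiv t (interior_subset ht)).differentiableAt.differentiableWithinAt)
    hbound 0 self_mem_Ici s hs hs

theorem integrableOn_rpow_mul_powProd {β : ℝ} (hβ₀ : 0 < β) (hβ₁ : β < 1) (hU : ∀ i, 0 < U i)
    (he : ∀ i, e i ≤ 0) {κ : ι} (hκ : e κ ≤ -1) :
    IntegrableOn (fun s => s ^ (-β) * powProd U e s) (Ioi 0) := by
  have hU' : ∀ i, 0 ≤ U i := fun i => (hU i).le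
  refine integrableOn_Ioi_of_rpow_bounds (C₀ := 1) (C₁ := (U κ)⁻¹) (p := -β) (q := -β - 1)
    (by linarith) (by linarith) (fun s (hs : 0 < s) => ?_) (fun s hs => ?_) (fun s hs => ?_)
  · exact ((continuousAt_rpow_const _ _ (Or.inl hs.ne')).mul
      (hasDerivAt_powProd_of_nonneg hU' hs.le).continuousAt).continuousWithinAt
  · refine abs_rpow_mul_le_mul_rpow hs.1 ?_
    rw [abs_of_nonneg (powProd_nonneg hU' hs.1.le)]
    exact powProd_le_one hU' he hs.1.le
  · have hs₀ : 0 < s := lt_trans one_pos hs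
    have hP : |powProd U e s| ≤ (U κ)⁻¹ * s ^ (-1 : ℝ) := calc
      |powProd U e s| ≤ (1 + U κ * s) ^ e κ := by
        rw [abs_of_nonneg (powProd_nonneg hU' hs₀.le)]
        exact powProd_le_rpow hU' he hs₀.le κ
      _ ≤ (1 + U κ * s) ^ (-1 : ℝ) :=
        rpow_le_rpow_of_exponent_le (one_le_one_add_mul (hU' κ) hs₀.le) hκ
      _ ≤ (U κ * s) ^ (-1 : ℝ) :=
        rpow_le_rpow_of_nonpos (mul_pos (hU κ) hs₀) (by linarith) (by norm_num)
      _ = (U κ)⁻¹ * s ^ (-1 : ℝ) := by rw [mul_rpow (hU' κ) hs₀.le, rpow_neg_one]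
    rw [sub_eq_add_neg, rpow_add hs₀, ← mul_assoc, mul_comm _ (s ^ (-β)), mul_assoc]
    calc |s ^ (-β) * powProd U e s| ≤ s ^ (-β) * ((U κ)⁻¹ * s ^ (-1 : ℝ)) := by
          rw [abs_mul, abs_of_pos (rpow_pos_of_pos hs₀ _)]
          exact mul_le_mul_of_nonneg_left hP (rpow_pos_of_pos hs₀ _).le
      _ = _ := by ring

theorem integral_rpow_mul_one_sub_powProd {β : ℝ} (hβ₀ : 0 < β) (hβ₁ : β < 1)
    (hU : ∀ i, 0 < U i) (he : ∀ i, e i ≤ 0) :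
    ∫ s in Ioi (0 : ℝ), s ^ (-β - 1) * (1 - powProd U e s) =
      β⁻¹ * ∑ κ, -e κ * U κ * ∫ s in Ioi (0 : ℝ), s ^ (-β) * powProd U (e - Pi.single κ 1) s := by
  have hU' : ∀ i, 0 ≤ U i := fun i => (hU i).le
  have hint : ∀ κ ∈ Finset.univ, IntegrableOn
      (fun s => -e κ * U κ * (s ^ (-β) * powProd U (e - Pi.single κ 1) s)) (Ioi 0) :=
    fun κ _ => (integrableOn_rpow_mul_powProd hβ₀ hβ₁ hU (sub_single_one_nonpos he κ) (κ := κ)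
      (by simp only [Pi.sub_apply, Pi.single_eq_same]; linarith [he κ])).const_mul _
  have hderiv : ∀ s ∈ Ioi (0 : ℝ), HasDerivAt (fun s => 1 - powProd U e s)
      (∑ κ, -e κ * U κ * powProd U (e - Pi.single κ 1) s) s := fun s hs =>
    ((hasDerivAt_powProd_of_nonneg hU' hs.out.le).const_sub 1).congr_deriv
      (by simp [← Finset.sum_neg_distrib])
  have hsmall : ∀ s ∈ Ioi (0 : ℝ), |1 - powProd U e s| ≤ (∑ κ, -e κ * U κ) * s := fun s hs => by
    rw [abs_of_nonneg (sub_nonneg.mpr (powProd_le_one hU' he hs.out.le))]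
    exact one_sub_powProd_le hU' he hs.out.le
  have hbounded : ∀ s ∈ Ioi (0 : ℝ), |1 - powProd U e s| ≤ 1 := fun s hs => by
    rw [abs_le]
    constructor <;>
      linarith [powProd_nonneg (e := e) hU' hs.out.le, powProd_le_one hU' he hs.out.le]
  have hsum : (fun s => s ^ (-β) * ∑ κ, -e κ * U κ * powProd U (e - Pi.single κ 1) s) =
      fun s => ∑ κ, -e κ * U κ * (s ^ (-β) * powProd U (e - Pi.single κ 1) s) := by
    ext s
    rw [Finset.mul_sum]
    exact Finset.sum_congr rfl fun κ _ => by ring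
  rw [integral_Ioi_rpow_mul_eq_of_hasDerivAt hβ₀ hβ₁ hderiv hsmall hbounded
    (hsum ▸ integrable_finsetSum _ hint), hsum, integral_finsetSum _ hint]
  simp only [integral_const_mul]

theorem powProd_div_mul_one_sub (hU : ∀ i, 0 ≤ U i) {μ : ι} (hμ : 0 < U μ) {z : ℝ}
    (hz : z ∈ Ioo (0 : ℝ) 1) :
    powProd U e (z / (U μ * (1 - z))) =
      (∏ i ∈ Finset.univ.erase μ, (1 - (1 - U i / U μ) * z) ^ e i) * (1 - z) ^ (-∑ i, e i) := by
  obtain ⟨hz₀, hz₁⟩ := hz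
  have hw : 0 < 1 - z := sub_pos.mpr hz₁
  have hnum : ∀ i, 0 ≤ 1 - (1 - U i / U μ) * z := fun i => by
    nlinarith [div_nonneg (hU i) hμ.le]
  rw [Finset.prod_erase _ (by simp [div_self hμ.ne'])]
  simp_rw [powProd, one_add_mul_div_mul_one_sub hμ.ne' hz₁.ne, div_rpow (hnum _) hw.le,
    Finset.prod_div_distrib, ← rpow_sum_of_pos hw, rpow_neg hw.le, div_eq_mul_inv]

theorem integral_rpow_mul_powProd_eq (hU : ∀ i, 0 ≤ U i) {μ : ι} (hμ : 0 < U μ) (β : ℝ) :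
    ∫ s in Ioi (0 : ℝ), s ^ (-β) * powProd U e s =
      U μ ^ (β - 1) * ∫ z in Ioo (0 : ℝ) 1, z ^ (-β) * (1 - z) ^ (-∑ i, e i + β - 2) *
        ∏ i ∈ Finset.univ.erase μ, (1 - (1 - U i / U μ) * z) ^ e i := by
  rw [integral_Ioi_eq_integral_Ioo_comp_div_mul_one_sub hμ, ← integral_const_mul]
  refine setIntegral_congr_fun measurableSet_Ioo fun z hz => ?_
  rw [powProd_div_mul_one_sub hU hμ hz]
  obtain ⟨hz₀, hz₁⟩ := hz
  have hw : 0 < 1 - z := sub_pos.mpr hz₁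
  rw [div_rpow hz₀.le (mul_pos hμ hw).le, mul_rpow hμ.le hw.le, rpow_sub_one hμ.ne',
    rpow_sub hw, rpow_add hw, rpow_two, rpow_neg hμ.le, rpow_neg hw.le]
  field_simp

theorem integral_rpow_mul_powProd_sub_single_eq (hU : ∀ i, 0 ≤ U i) {μ : ι} (hμ : 0 < U μ)
    (β : ℝ) (κ : ι) :
    ∫ s in Ioi (0 : ℝ), s ^ (-β) * powProd U (e - Pi.single κ 1) s =
      U μ ^ (β - 1) * ∫ z in Ioo (0 : ℝ) 1, z ^ (-β) * (1 - z) ^ (-∑ i, e i + β - 1) *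
        ∏ i ∈ Finset.univ.erase μ, (1 - (1 - U i / U μ) * z) ^ (e i - if i = κ then 1 else 0) := by
  have hexp : -∑ i, (e - Pi.single κ 1 : ι → ℝ) i + β - 2 = -∑ i, e i + β - 1 := by
    simp only [Pi.sub_apply, Finset.sum_sub_distrib, Finset.sum_pi_single', Finset.mem_univ,
      if_true]
    ring
  rw [integral_rpow_mul_powProd_eq hU hμ, hexp]
  simp only [Pi.sub_apply, Pi.single_apply]

end PowProd

theorem stmt_4_general (α : ℝ) (hα : 2 < α) (n : ℕ)
    (U : Fin n → ℝ) (hU : ∀ i, 0 < U i) (τ : Fin n → ℕ)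
    (μ : Fin n) :
    (∫ u : EuclideanSpace ℝ (Fin 2),
        (1 - ∏ i, (1 + U i * ‖u‖ ^ (-α)) ^ (-(τ i : ℝ)))) =
      π * ∑ κ : Fin n, (τ κ : ℝ) * U κ * U μ ^ (2 / α - 1) *
        ∫ z in Set.Ioo (0 : ℝ) 1,
          z ^ (-(2 / α)) * (1 - z) ^ ((∑ i, (τ i : ℝ)) + 2 / α - 1) *
            ∏ i ∈ Finset.univ.erase μ,
              (1 - (1 - U i / U μ) * z) ^
                (-(τ i : ℝ) - if i = κ then 1 else 0) := by
  have hα₀ : 0 < α := by linarith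
  set e : Fin n → ℝ := fun i => -(τ i : ℝ)
  calc _ = ∫ u : EuclideanSpace ℝ (Fin 2), 1 - powProd U e (‖u‖ ^ (-α)) := rfl
    _ = 2 * π * (α⁻¹ * ((2 / α)⁻¹ * ∑ κ, -e κ * U κ *
          ∫ s in Ioi (0 : ℝ), s ^ (-(2 / α)) * powProd U (e - Pi.single κ 1) s)) := by
      rw [integral_fun_norm_euclideanSpace_fin_two (fun r => 1 - powProd U e (r ^ (-α))),
        integral_Ioi_mul_comp_rpow_neg hα₀ (fun s => 1 - powProd U e s),
        integral_rpow_mul_one_sub_powProd (by positivity) ((div_lt_one hα₀).mpr hα) hU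
          fun i => neg_nonpos.mpr (Nat.cast_nonneg _)]
    _ = _ := by
      simp only [integral_rpow_mul_powProd_sub_single_eq (fun i => (hU i).le) (hU μ), e,
        Finset.sum_neg_distrib, neg_neg, Finset.mul_sum]
      refine Finset.sum_congr rfl fun κ _ => ?_
      field_simp

theorem stmt_4 (α : ℝ) (hα : 2 < α) (n : ℕ) (hn : 0 < n)
    (U : Fin n → ℝ) (hU : ∀ i, 0 < U i) (τ : Fin n → ℕ)
    (μ : Fin n) (hμ : ∀ i, U i ≤ U μ) :
    (∫ u : EuclideanSpace ℝ (Fin 2),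
        (1 - ∏ i, (1 + U i * ‖u‖ ^ (-α)) ^ (-(τ i : ℝ)))) =
      π * ∑ κ : Fin n, (τ κ : ℝ) * U κ * U μ ^ (2 / α - 1) *
        ∫ z in Set.Ioo (0 : ℝ) 1,
          z ^ (-(2 / α)) * (1 - z) ^ ((∑ i, (τ i : ℝ)) + 2 / α - 1) *
            ∏ i ∈ Finset.univ.erase μ,
              (1 - (1 - U i / U μ) * z) ^
                (-(τ i : ℝ) - if i = κ then 1 else 0) :=
  stmt_4_general α hα n U hU τ μ
end

section
/- Let α > 2, let U > 0 be a real number, and let τ be a positive integer. Then ∫_{ℝ²} (1 − (1 + U · ‖u‖^(−α))^(−τ)) du = π · τ · U^(2/α) · B(1 − 2/α, τ + 2/α), where B(a, b) = Γ(a)Γ(b)/Γ(a + b) is the Beta function and the left-hand side is a Lebesgue integral over the plane. -/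
open MeasureTheory Real Set ProbabilityTheory

/-!
In polar coordinates the integral is `d · vol(B) ∫₀^∞ r^(d-1) (1 - (1 + U r^(-α))^(-τ)) dr`, and
the substitution `t = U r^(-α)` turns it into `U^s/α ∫₀^∞ t^(-s-1) (1 - (1 + t)^(-τ)) dt` with
`s = d/α`. As `(1 + t)^(-τ) - (1 + t)^(-(τ+1)) = t (1 + t)^(-(τ+1))`, raising `τ` by one adds the
Beta integral `B(1 - s, τ + s)` on the half-line, and `B(a, b + 1) = B(a, b) b / (a + b)` shows that
the sum is `(τ + 1)/s · B(1 - s, τ + 1 + s)`.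
-/

lemma intervalIntegral_rpow_mul_one_sub_rpow_eq_beta {a b : ℝ} (ha : 0 < a) (hb : 0 < b) :
    ∫ x in (0:ℝ)..1, x ^ (a - 1) * (1 - x) ^ (b - 1) = beta a b := by
  have hre : Complex.betaIntegral a b =
      ((∫ x in (0:ℝ)..1, x ^ (a - 1) * (1 - x) ^ (b - 1) : ℝ) : ℂ) := by
    rw [Complex.betaIntegral, ← intervalIntegral.integral_ofReal]
    refine intervalIntegral.integral_congr fun x hx => ?_
    rw [uIcc_of_le zero_le_one] at hx
    push_cast [Complex.ofReal_cpow hx.1, Complex.ofReal_cpow (sub_nonneg.2 hx.2)]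
    rfl
  rw [beta_eq_betaIntegralReal a b ha hb, hre, Complex.ofReal_re]

lemma integral_Ioi_rpow_mul_one_add_rpow_eq_beta {a b : ℝ} (ha : 0 < a) (hb : 0 < b) :
    ∫ t in Ioi (0:ℝ), t ^ (a - 1) * (1 + t) ^ (-(a + b)) = beta a b := by
  have hderiv : ∀ x ∈ Ioo (0:ℝ) 1,
      HasDerivWithinAt (fun x : ℝ => x⁻¹ - 1) (-(x ^ 2)⁻¹) (Ioo 0 1) x := fun x hx =>
    ((hasDerivAt_inv hx.1.ne').sub_const 1).hasDerivWithinAt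
  have hinj : InjOn (fun x : ℝ => x⁻¹ - 1) (Ioo 0 1) := fun x _ y _ h =>
    inv_injective (sub_left_injective h)
  have himg : (fun x : ℝ => x⁻¹ - 1) '' Ioo 0 1 = Ioi 0 := by
    ext t
    constructor
    · rintro ⟨x, ⟨hx0, hx1⟩, rfl⟩
      exact sub_pos.2 ((one_lt_inv_iff₀).2 ⟨hx0, hx1⟩)
    · intro (ht : 0 < t)
      refine ⟨(1 + t)⁻¹, ⟨by positivity, inv_lt_one_of_one_lt₀ (by linarith)⟩, ?_⟩
      simp
  have hcov : ∀ x ∈ Ioo (0:ℝ) 1,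
      |(-(x ^ 2)⁻¹)| • ((x⁻¹ - 1) ^ (a - 1) * (1 + (x⁻¹ - 1)) ^ (-(a + b))) =
        x ^ (b - 1) * (1 - x) ^ (a - 1) := by
    rintro x ⟨hx0, hx1⟩
    have hx : x⁻¹ - 1 = (1 - x) * x⁻¹ := by field_simp
    rw [smul_eq_mul, abs_neg, abs_inv, abs_of_nonneg (sq_nonneg x), add_sub_cancel, hx,
      mul_rpow (by linarith) (by positivity), inv_rpow hx0.le, inv_rpow hx0.le,
      ← rpow_neg hx0.le, ← rpow_natCast, ← rpow_neg hx0.le, ← rpow_neg hx0.le]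
    calc _ = (x ^ (-(2:ℝ)) * x ^ (-(a - 1)) * x ^ (-(-(a + b)))) * (1 - x) ^ (a - 1) := by
          push_cast; ring
      _ = x ^ (b - 1) * (1 - x) ^ (a - 1) := by
          rw [← rpow_add hx0, ← rpow_add hx0]; ring_nf
  rw [← himg, integral_image_eq_integral_abs_deriv_smul measurableSet_Ioo hderiv hinj,
    setIntegral_congr_fun measurableSet_Ioo hcov, ← integral_Ioc_eq_integral_Ioo,
    ← intervalIntegral.integral_of_le zero_le_one,
    intervalIntegral_rpow_mul_one_sub_rpow_eq_beta hb ha]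
  unfold beta
  rw [mul_comm, add_comm]

lemma integrableOn_Ioi_rpow_mul_one_add_rpow {a b : ℝ} (ha : 0 < a) (hb : 0 < b) :
    IntegrableOn (fun t : ℝ => t ^ (a - 1) * (1 + t) ^ (-(a + b))) (Ioi 0) :=
  .of_integral_ne_zero <| by
    rw [integral_Ioi_rpow_mul_one_add_rpow_eq_beta ha hb]; exact (beta_pos ha hb).ne'

lemma ProbabilityTheory.beta_add_one_right {a b : ℝ} (hb : b ≠ 0) (hab : a + b ≠ 0) :
    beta a (b + 1) = beta a b * b / (a + b) := by
  unfold beta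
  rw [Gamma_add_one hb, ← add_assoc, Gamma_add_one hab]
  field_simp

lemma rpow_mul_one_sub_one_add_rpow_neg_add_one {t : ℝ} (ht : 0 < t) (s τ : ℝ) :
    t ^ (-s - 1) * (1 - (1 + t) ^ (-(τ + 1))) =
      t ^ (-s - 1) * (1 - (1 + t) ^ (-τ)) +
        t ^ ((1 - s) - 1) * (1 + t) ^ (-((1 - s) + (τ + s))) := by
  have h1 : (1 + t) ^ (-τ) = (1 + t) ^ (-(τ + 1)) * (1 + t) := by
    rw [← rpow_add_one (by positivity)]; ring_nf
  have h2 : t ^ ((1 - s) - 1) = t ^ (-s - 1) * t := by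
    rw [← rpow_add_one ht.ne']; ring_nf
  rw [h1, h2, show -((1 - s) + (τ + s)) = -(τ + 1) by ring]
  ring

section

variable {s : ℝ} (hs0 : 0 < s) (hs1 : s < 1)
include hs0 hs1

lemma integrableOn_Ioi_rpow_mul_one_sub_one_add_rpow_neg_natCast (τ : ℕ) :
    IntegrableOn (fun t : ℝ => t ^ (-s - 1) * (1 - (1 + t) ^ (-(τ : ℝ)))) (Ioi 0) := by
  induction τ with
  | zero => simp
  | succ τ ih =>
    push_cast
    refine (ih.add (integrableOn_Ioi_rpow_mul_one_add_rpow (sub_pos.2 hs1)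
      (by positivity : (0:ℝ) < τ + s))).congr_fun (fun t ht => ?_) measurableSet_Ioi
    exact (rpow_mul_one_sub_one_add_rpow_neg_add_one ht s τ).symm

lemma integral_Ioi_rpow_mul_one_sub_one_add_rpow_neg_natCast (τ : ℕ) :
    ∫ t in Ioi (0:ℝ), t ^ (-s - 1) * (1 - (1 + t) ^ (-(τ : ℝ))) =
      τ / s * beta (1 - s) (τ + s) := by
  induction τ with
  | zero => simp
  | succ τ ih =>
    push_cast
    rw [setIntegral_congr_fun measurableSet_Ioi
        (fun t ht => rpow_mul_one_sub_one_add_rpow_neg_add_one ht s τ),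
      integral_add (integrableOn_Ioi_rpow_mul_one_sub_one_add_rpow_neg_natCast hs0 hs1 τ)
        (integrableOn_Ioi_rpow_mul_one_add_rpow (sub_pos.2 hs1) (by positivity)),
      ih, integral_Ioi_rpow_mul_one_add_rpow_eq_beta (sub_pos.2 hs1) (by positivity),
      add_right_comm, beta_add_one_right (by positivity) (by ring_nf; positivity),
      show 1 - s + (τ + s) = (τ : ℝ) + 1 by ring]
    field_simp

end

lemma integral_Ioi_rpow_mul_comp_mul_rpow_neg (g : ℝ → ℝ) (p : ℝ) {α U : ℝ} (hα : 0 < α)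
    (hU : 0 < U) :
    ∫ r in Ioi (0:ℝ), r ^ p * g (U * r ^ (-α)) =
      U ^ ((p + 1) / α) / α * ∫ t in Ioi (0:ℝ), t ^ (-((p + 1) / α) - 1) * g t := by
  set s := (p + 1) / α with hs
  have hpow : ∀ r ∈ Ioi (0:ℝ), r ^ p * g (U * r ^ (-α)) =
      (|-α| * r ^ (-α - 1)) • (α⁻¹ * ((r ^ (-α)) ^ (-s - 1) * g (U * r ^ (-α)))) := by
    intro r (hr : 0 < r)
    rw [smul_eq_mul, abs_neg, abs_of_pos hα, ← rpow_mul hr.le]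
    calc r ^ p * g (U * r ^ (-α))
        = (α * α⁻¹) * r ^ ((-α - 1) + -α * (-s - 1)) * g (U * r ^ (-α)) := by
          rw [mul_inv_cancel₀ hα.ne', hs]; field_simp; ring_nf
      _ = _ := by rw [rpow_add hr]; ring
  have hscale : ∀ t ∈ Ioi (0:ℝ), α⁻¹ * (t ^ (-s - 1) * g (U * t)) =
      α⁻¹ * U ^ (s + 1) * ((U * t) ^ (-s - 1) * g (U * t)) := by
    intro t (ht : 0 < t)
    rw [mul_rpow hU.le ht.le, mul_assoc, ← mul_assoc (U ^ (s + 1)), ← mul_assoc (U ^ (s + 1)),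
      ← rpow_add hU]
    simp
  rw [setIntegral_congr_fun measurableSet_Ioi hpow,
    integral_comp_rpow_Ioi (fun y => α⁻¹ * (y ^ (-s - 1) * g (U * y))) (neg_ne_zero.2 hα.ne'),
    setIntegral_congr_fun measurableSet_Ioi hscale, integral_const_mul,
    integral_comp_mul_left_Ioi (fun y => y ^ (-s - 1) * g y) 0 hU, mul_zero, smul_eq_mul,
    rpow_add_one hU.ne']
  field_simp

theorem integral_one_sub_one_add_mul_norm_rpow_neg_rpow_neg {E : Type*} [NormedAddCommGroup E]
    [NormedSpace ℝ E] [Nontrivial E] [FiniteDimensional ℝ E] [MeasurableSpace E] [BorelSpace E]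
    (μ : Measure E) [μ.IsAddHaarMeasure] {α : ℝ} (hα : Module.finrank ℝ E < α) {U : ℝ}
    (hU : 0 < U) (τ : ℕ) :
    ∫ x, 1 - (1 + U * ‖x‖ ^ (-α)) ^ (-(τ : ℝ)) ∂μ =
      μ.real (Metric.ball 0 1) * τ * U ^ (Module.finrank ℝ E / α) *
        beta (1 - Module.finrank ℝ E / α) (τ + Module.finrank ℝ E / α) := by
  rw [integral_fun_norm_addHaar μ (fun r => 1 - (1 + U * r ^ (-α)) ^ (-(τ : ℝ)))]
  set d := Module.finrank ℝ E
  have hd : 0 < d := Module.finrank_pos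
  have hα0 : 0 < α := lt_trans (by exact_mod_cast hd) hα
  have hpow : ∀ y : ℝ, y ^ (d - 1 : ℕ) = y ^ ((d : ℝ) - 1) := fun y => by
    rw [← rpow_natCast, Nat.cast_pred hd]
  simp only [smul_eq_mul, nsmul_eq_mul, hpow]
  rw [integral_Ioi_rpow_mul_comp_mul_rpow_neg (fun t => 1 - (1 + t) ^ (-(τ : ℝ))) _ hα0 hU,
    sub_add_cancel,
    integral_Ioi_rpow_mul_one_sub_one_add_rpow_neg_natCast (by positivity)
      ((div_lt_one hα0).2 hα)]
  field_simp

theorem stmt_5_general (α : ℝ) (hα : 2 < α) (U : ℝ) (hU : 0 < U) (τ : ℕ) :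
    (∫ u : EuclideanSpace ℝ (Fin 2),
        (1 - (1 + U * ‖u‖ ^ (-α)) ^ (-(τ : ℝ)))) =
      π * τ * U ^ (2 / α) *
        (Real.Gamma (1 - 2 / α) * Real.Gamma ((τ : ℝ) + 2 / α) /
          Real.Gamma ((1 - 2 / α) + ((τ : ℝ) + 2 / α))) := by
  have hball : volume.real (Metric.ball (0 : EuclideanSpace ℝ (Fin 2)) 1) = π := by
    simp [Measure.real, pi_nonneg]
  have h := integral_one_sub_one_add_mul_norm_rpow_neg_rpow_neg
    (volume : Measure (EuclideanSpace ℝ (Fin 2))) (by simpa using hα) hU τ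
  simpa [hball, beta] using h

theorem stmt_5 (α : ℝ) (hα : 2 < α) (U : ℝ) (hU : 0 < U) (τ : ℕ) (hτ : 0 < τ) :
    (∫ u : EuclideanSpace ℝ (Fin 2),
        (1 - (1 + U * ‖u‖ ^ (-α)) ^ (-(τ : ℝ)))) =
      π * τ * U ^ (2 / α) *
        (Real.Gamma (1 - 2 / α) * Real.Gamma ((τ : ℝ) + 2 / α) /
          Real.Gamma ((1 - 2 / α) + ((τ : ℝ) + 2 / α))) :=
  stmt_5_general α hα U hU τ
end

section
/- Let α > 2, let n be a positive integer, let U : Fin n → ℝ with U i > 0 for all i, and let τ : Fin n → ℕ. Then the function u ↦ 1 − ∏_{i} (1 + U i · ‖u‖^(−α))^(−τ i) is Lebesgue integrable on ℝ². -/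
/-!
Writing `∏ i, (1 + aᵢ) ^ (-bᵢ) = exp (-x)` with `0 ≤ x = ∑ i, bᵢ log (1 + aᵢ) ≤ ∑ i, bᵢ aᵢ`, the
integrand `1 - exp (-x)` is squeezed between `0` and `min 1 x`. At `aᵢ = Uᵢ ‖u‖ ^ (-α)` this is
`O(min 1 (‖u‖ ^ (-α)))`, hence `O((1 + ‖u‖) ^ (-α))`, which is integrable on `ℝ²` because `α > 2`.
-/

open MeasureTheory Real

section ProdOneAddRpowNeg

variable {ι : Type*} (s : Finset ι) {a b : ι → ℝ}

lemma prod_one_add_rpow_neg_eq_exp (ha : ∀ i, 0 ≤ a i) :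
    ∏ i ∈ s, (1 + a i) ^ (-b i) = exp (-∑ i ∈ s, b i * log (1 + a i)) := by
  rw [← Finset.sum_neg_distrib, exp_sum]
  refine Finset.prod_congr rfl fun i _ => ?_
  rw [rpow_def_of_pos (by linarith [ha i])]
  ring_nf

lemma sum_mul_log_one_add_nonneg (ha : ∀ i, 0 ≤ a i) (hb : ∀ i, 0 ≤ b i) :
    0 ≤ ∑ i ∈ s, b i * log (1 + a i) :=
  Finset.sum_nonneg fun i _ => mul_nonneg (hb i) (log_nonneg (by linarith [ha i]))

lemma sum_mul_log_one_add_le (ha : ∀ i, 0 ≤ a i) (hb : ∀ i, 0 ≤ b i) :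
    ∑ i ∈ s, b i * log (1 + a i) ≤ ∑ i ∈ s, b i * a i := by
  refine Finset.sum_le_sum fun i _ => mul_le_mul_of_nonneg_left ?_ (hb i)
  linarith [log_le_sub_one_of_pos (show 0 < 1 + a i by linarith [ha i])]

lemma one_sub_prod_one_add_rpow_neg_nonneg (ha : ∀ i, 0 ≤ a i) (hb : ∀ i, 0 ≤ b i) :
    0 ≤ 1 - ∏ i ∈ s, (1 + a i) ^ (-b i) := by
  rw [prod_one_add_rpow_neg_eq_exp s ha, sub_nonneg, exp_le_one_iff, neg_nonpos]
  exact sum_mul_log_one_add_nonneg s ha hb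

lemma one_sub_prod_one_add_rpow_neg_le_min (ha : ∀ i, 0 ≤ a i) (hb : ∀ i, 0 ≤ b i) :
    1 - ∏ i ∈ s, (1 + a i) ^ (-b i) ≤ min 1 (∑ i ∈ s, b i * a i) := by
  rw [prod_one_add_rpow_neg_eq_exp s ha]
  set x := ∑ i ∈ s, b i * log (1 + a i)
  refine le_min (by linarith [exp_pos (-x)]) ?_
  linarith [add_one_le_exp (-x), sum_mul_log_one_add_le s ha hb]

end ProdOneAddRpowNeg

lemma min_one_mul_le_max_one_mul_min_one {c t : ℝ} (ht : 0 ≤ t) :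
    min 1 (c * t) ≤ max 1 c * min 1 t := by
  rcases le_total t 1 with h | h
  · rw [min_eq_right h]
    exact (min_le_right _ _).trans (mul_le_mul_of_nonneg_right (le_max_right _ _) ht)
  · rw [min_eq_left h, mul_one]
    exact (min_le_left _ _).trans (le_max_left _ _)

lemma min_one_rpow_neg_le {α r : ℝ} (hα : 0 ≤ α) (hr : 0 ≤ r) :
    min 1 (r ^ (-α)) ≤ 2 ^ α * (1 + r) ^ (-α) := by
  have hmid : 2 ^ α * (1 + r) ^ (-α) = ((1 + r) / 2) ^ (-α) := by
    rw [div_rpow (by linarith) zero_le_two, rpow_neg zero_le_two, div_inv_eq_mul]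
    ring
  have hmid_pos : 0 < (1 + r) / 2 := by linarith
  rw [hmid]
  rcases le_total r 1 with h | h
  · exact (min_le_left _ _).trans
      (one_le_rpow_of_pos_of_le_one_of_nonpos hmid_pos (by linarith) (by linarith))
  · exact (min_le_right _ _).trans (rpow_le_rpow_of_nonpos hmid_pos (by linarith) (by linarith))

theorem stmt_6_general (α : ℝ) (hα : 2 < α) (n : ℕ)
    (U : Fin n → ℝ) (hU : ∀ i, 0 < U i) (τ : Fin n → ℕ) :
    Integrable
      (fun u : EuclideanSpace ℝ (Fin 2) =>
        1 - ∏ i, (1 + U i * ‖u‖ ^ (-α)) ^ (-(τ i : ℝ))) := by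
  set C := ∑ i, (τ i : ℝ) * U i
  have hdom : Integrable (fun u : EuclideanSpace ℝ (Fin 2) =>
      max 1 C * 2 ^ α * (1 + ‖u‖) ^ (-α)) :=
    (integrable_one_add_norm (by rw [finrank_euclideanSpace_fin]; push_cast; linarith)).const_mul _
  refine hdom.mono' (by fun_prop : Measurable _).aestronglyMeasurable (ae_of_all _ fun u => ?_)
  have hs : 0 ≤ ‖u‖ ^ (-α) := rpow_nonneg (norm_nonneg u) _
  have ha : ∀ i, 0 ≤ U i * ‖u‖ ^ (-α) := fun i => mul_nonneg (hU i).le hs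
  have hb : ∀ i, 0 ≤ (τ i : ℝ) := fun i => Nat.cast_nonneg _
  have hsum : ∑ i, (τ i : ℝ) * (U i * ‖u‖ ^ (-α)) = C * ‖u‖ ^ (-α) := by
    simp only [C, Finset.sum_mul, mul_assoc]
  rw [norm_of_nonneg (one_sub_prod_one_add_rpow_neg_nonneg _ ha hb)]
  calc 1 - ∏ i, (1 + U i * ‖u‖ ^ (-α)) ^ (-(τ i : ℝ))
      ≤ min 1 (C * ‖u‖ ^ (-α)) := hsum ▸ one_sub_prod_one_add_rpow_neg_le_min _ ha hb
    _ ≤ max 1 C * min 1 (‖u‖ ^ (-α)) := min_one_mul_le_max_one_mul_min_one hs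
    _ ≤ max 1 C * (2 ^ α * (1 + ‖u‖) ^ (-α)) := by
        gcongr
        exact min_one_rpow_neg_le (by linarith) (norm_nonneg u)
    _ = max 1 C * 2 ^ α * (1 + ‖u‖) ^ (-α) := by ring

theorem stmt_6 (α : ℝ) (hα : 2 < α) (n : ℕ) (hn : 0 < n)
    (U : Fin n → ℝ) (hU : ∀ i, 0 < U i) (τ : Fin n → ℕ) :
    Integrable
      (fun u : EuclideanSpace ℝ (Fin 2) =>
        1 - ∏ i, (1 + U i * ‖u‖ ^ (-α)) ^ (-(τ i : ℝ))) :=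
  stmt_6_general α hα n U hU τ
end

section
/- Let α > 0, let a_1, a_2, b_1, b_2 be real numbers with 0 < a_1 ≤ a_2 and 0 ≤ b_1 ≤ b_2, and let 0 < ε < 1. Define, for i ∈ {1, 2} and x ≥ 0: ϑ_i(x) = exp(−a_i·(2^x − 1) − b_i·(2^x − 1)^(2/α)) and φ_i(x) = x · ϑ_i(x). Let M = sup{ φ_1(z) : z ≥ 0 and ϑ_1(z) ≥ 1 − ε }. Then for all z_1, z_2 ≥ 0 and all β ∈ [0, 1] such that ϑ_1(z_1) ≥ 1 − ε and ϑ_2(z_2) ≥ 1 − ε, one has β²·φ_1(z_1) + (1 − β²)·φ_2(z_2) ≤ M; consequently the supremum of the constrained throughput β²·φ_1(z_1) + (1 − β²)·φ_2(z_2) over the feasible set equals M and is approached with β² = 1 (whence the optimal rate for user 2 is R_2 = (1 − β²)·z_2 = 0). -/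
/-!
Since `a₁ ≤ a₂` and `b₁ ≤ b₂`, the near user's success probability dominates: `ϑ₂ ≤ ϑ₁` on
`[0, ∞)`. Hence a rate feasible for user 2 is feasible for user 1 with at least the same
throughput, and the LTAT is a convex combination of two values of `φ₁` at feasible rates, so it
is at most `M`. Conversely `β = 1, z₂ = 0` realises every value of `φ₁`. The supremum `M` is finite
because `x · exp (-a₁ (2^x - 1)) ≤ 1 / (a₁ log 2)`.
-/

open Real

lemma csSup_eq_csSup_of_subset_of_forall_le {γ : Type*} [ConditionallyCompleteLattice γ]
    {S T : Set γ} (hS : S.Nonempty) (hST : S ⊆ T) (hT : ∀ y ∈ T, y ≤ sSup S) :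
    sSup T = sSup S :=
  le_antisymm (csSup_le (hS.mono hST) hT) (csSup_le_csSup ⟨_, hT⟩ hS hST)

lemma sq_mul_add_one_sub_sq_mul_le {β u v M : ℝ} (hβ₀ : 0 ≤ β) (hβ₁ : β ≤ 1) (hu : u ≤ M)
    (hv : v ≤ M) : β ^ 2 * u + (1 - β ^ 2) * v ≤ M :=
  convex_Iic M hu hv (sq_nonneg β) (sub_nonneg.2 (pow_le_one₀ hβ₀ hβ₁)) (by ring)

namespace HarqOma

noncomputable def successProb (α a b x : ℝ) : ℝ :=
  exp (-(a * ((2 : ℝ) ^ x - 1)) - b * ((2 : ℝ) ^ x - 1) ^ (2 / α))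

lemma mul_log_add_one_le_rpow {b : ℝ} (hb : 0 < b) (x : ℝ) : x * log b + 1 ≤ b ^ x := by
  rw [rpow_def_of_pos hb, mul_comm]
  exact add_one_le_exp _

lemma two_rpow_sub_one_nonneg {x : ℝ} (hx : 0 ≤ x) : 0 ≤ (2 : ℝ) ^ x - 1 :=
  sub_nonneg.2 (one_le_rpow one_le_two hx)

variable {α : ℝ}

lemma successProb_zero (hα : α ≠ 0) (a b : ℝ) : successProb α a b 0 = 1 := by
  simp [successProb, zero_rpow (div_ne_zero two_ne_zero hα)]

lemma successProb_anti {a a' b b' x : ℝ} (ha : a ≤ a') (hb : b ≤ b') (hx : 0 ≤ x) :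
    successProb α a' b' x ≤ successProb α a b x := by
  have ht := two_rpow_sub_one_nonneg hx
  have hs := rpow_nonneg ht (2 / α)
  unfold successProb
  gcongr

lemma mul_successProb_le {a b x : ℝ} (ha : 0 < a) (hb : 0 ≤ b) (hx : 0 ≤ x) :
    x * successProb α a b x ≤ 1 / (a * log 2) := by
  set t := (2 : ℝ) ^ x - 1
  have hlog : 0 < log 2 := log_pos one_lt_two
  have hϑ : successProb α a b x ≤ exp (-(a * t)) :=
    (successProb_anti (b := 0) le_rfl hb hx).trans_eq (by simp [successProb, t])
  have hx_le : a * log 2 * x ≤ exp (a * t) := calc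
    a * log 2 * x ≤ a * t := by nlinarith [mul_log_add_one_le_rpow two_pos x]
    _ ≤ a * t + 1 := le_add_of_nonneg_right zero_le_one
    _ ≤ exp (a * t) := add_one_le_exp _
  rw [le_div_iff₀ (by positivity)]
  calc x * successProb α a b x * (a * log 2)
      ≤ x * exp (-(a * t)) * (a * log 2) := by gcongr
    _ = a * log 2 * x * exp (-(a * t)) := by ring
    _ ≤ exp (a * t) * exp (-(a * t)) := by gcongr
    _ = 1 := by rw [← exp_add, add_neg_cancel, exp_zero]

end HarqOma

open Real HarqOma

theorem stmt_15_general (α a₁ a₂ b₁ b₂ ε : ℝ) (hα : 0 < α)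
    (ha₁ : 0 < a₁) (ha : a₁ ≤ a₂) (hb₁ : 0 ≤ b₁) (hb : b₁ ≤ b₂)
    (hε₀ : 0 < ε)
    (ϑ₁ ϑ₂ φ₁ φ₂ : ℝ → ℝ)
    (hϑ₁ : ∀ x, ϑ₁ x =
      Real.exp (-(a₁ * ((2 : ℝ) ^ x - 1)) - b₁ * ((2 : ℝ) ^ x - 1) ^ (2 / α)))
    (hϑ₂ : ∀ x, ϑ₂ x =
      Real.exp (-(a₂ * ((2 : ℝ) ^ x - 1)) - b₂ * ((2 : ℝ) ^ x - 1) ^ (2 / α)))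
    (hφ₁ : ∀ x, φ₁ x = x * ϑ₁ x) (hφ₂ : ∀ x, φ₂ x = x * ϑ₂ x)
    (M : ℝ) (hM : M = sSup {y : ℝ | ∃ z, 0 ≤ z ∧ 1 - ε ≤ ϑ₁ z ∧ y = φ₁ z}) :
    (∀ z₁ z₂ β : ℝ, 0 ≤ z₁ → 0 ≤ z₂ → 0 ≤ β → β ≤ 1 →
        1 - ε ≤ ϑ₁ z₁ → 1 - ε ≤ ϑ₂ z₂ →
        β ^ 2 * φ₁ z₁ + (1 - β ^ 2) * φ₂ z₂ ≤ M) ∧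
      sSup {y : ℝ | ∃ z₁ z₂ β : ℝ, 0 ≤ z₁ ∧ 0 ≤ z₂ ∧ 0 ≤ β ∧ β ≤ 1 ∧
          1 - ε ≤ ϑ₁ z₁ ∧ 1 - ε ≤ ϑ₂ z₂ ∧
          y = β ^ 2 * φ₁ z₁ + (1 - β ^ 2) * φ₂ z₂} = M := by
  set S := {y : ℝ | ∃ z, 0 ≤ z ∧ 1 - ε ≤ ϑ₁ z ∧ y = φ₁ z}
  have hϑ₂_le : ∀ z, 0 ≤ z → ϑ₂ z ≤ ϑ₁ z := fun z hz => by
    rw [hϑ₁, hϑ₂]; exact successProb_anti ha hb hz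
  have hS_bdd : BddAbove S := ⟨1 / (a₁ * log 2), by
    rintro _ ⟨z, hz, -, rfl⟩
    rw [hφ₁, hϑ₁]
    exact mul_successProb_le ha₁ hb₁ hz⟩
  have hφ₁_le : ∀ z, 0 ≤ z → 1 - ε ≤ ϑ₁ z → φ₁ z ≤ M := fun z hz hf =>
    hM ▸ le_csSup hS_bdd ⟨z, hz, hf, rfl⟩
  have hbound : ∀ z₁ z₂ β : ℝ, 0 ≤ z₁ → 0 ≤ z₂ → 0 ≤ β → β ≤ 1 →
      1 - ε ≤ ϑ₁ z₁ → 1 - ε ≤ ϑ₂ z₂ → β ^ 2 * φ₁ z₁ + (1 - β ^ 2) * φ₂ z₂ ≤ M := by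
    intro z₁ z₂ β hz₁ hz₂ hβ₀ hβ₁ hf₁ hf₂
    have hφ₂_le : φ₂ z₂ ≤ M := calc
      φ₂ z₂ ≤ φ₁ z₂ := by
        rw [hφ₁, hφ₂]; exact mul_le_mul_of_nonneg_left (hϑ₂_le z₂ hz₂) hz₂
      _ ≤ M := hφ₁_le z₂ hz₂ (hf₂.trans (hϑ₂_le z₂ hz₂))
    exact sq_mul_add_one_sub_sq_mul_le hβ₀ hβ₁ (hφ₁_le z₁ hz₁ hf₁) hφ₂_le
  have hϑ₁_zero : ϑ₁ 0 = 1 := (hϑ₁ 0).trans (successProb_zero hα.ne' a₁ b₁)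
  have hϑ₂_zero : ϑ₂ 0 = 1 := (hϑ₂ 0).trans (successProb_zero hα.ne' a₂ b₂)
  refine ⟨hbound, hM ▸ csSup_eq_csSup_of_subset_of_forall_le ?_ ?_ ?_⟩
  · exact ⟨φ₁ 0, 0, le_rfl, by linarith [hϑ₁_zero], rfl⟩
  · rintro _ ⟨z, hz, hf, rfl⟩
    exact ⟨z, 0, 1, hz, le_rfl, zero_le_one, le_rfl, hf, by linarith [hϑ₂_zero], by simp [hφ₂]⟩
  · rintro _ ⟨z₁, z₂, β, hz₁, hz₂, hβ₀, hβ₁, hf₁, hf₂, rfl⟩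
    exact hM ▸ hbound z₁ z₂ β hz₁ hz₂ hβ₀ hβ₁ hf₁ hf₂

theorem stmt_15 (α a₁ a₂ b₁ b₂ ε : ℝ) (hα : 0 < α)
    (ha₁ : 0 < a₁) (ha : a₁ ≤ a₂) (hb₁ : 0 ≤ b₁) (hb : b₁ ≤ b₂)
    (hε₀ : 0 < ε) (hε₁ : ε < 1)
    (ϑ₁ ϑ₂ φ₁ φ₂ : ℝ → ℝ)
    (hϑ₁ : ∀ x, ϑ₁ x =
      Real.exp (-(a₁ * ((2 : ℝ) ^ x - 1)) - b₁ * ((2 : ℝ) ^ x - 1) ^ (2 / α)))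
    (hϑ₂ : ∀ x, ϑ₂ x =
      Real.exp (-(a₂ * ((2 : ℝ) ^ x - 1)) - b₂ * ((2 : ℝ) ^ x - 1) ^ (2 / α)))
    (hφ₁ : ∀ x, φ₁ x = x * ϑ₁ x) (hφ₂ : ∀ x, φ₂ x = x * ϑ₂ x)
    (M : ℝ) (hM : M = sSup {y : ℝ | ∃ z, 0 ≤ z ∧ 1 - ε ≤ ϑ₁ z ∧ y = φ₁ z}) :
    (∀ z₁ z₂ β : ℝ, 0 ≤ z₁ → 0 ≤ z₂ → 0 ≤ β → β ≤ 1 →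
        1 - ε ≤ ϑ₁ z₁ → 1 - ε ≤ ϑ₂ z₂ →
        β ^ 2 * φ₁ z₁ + (1 - β ^ 2) * φ₂ z₂ ≤ M) ∧
      sSup {y : ℝ | ∃ z₁ z₂ β : ℝ, 0 ≤ z₁ ∧ 0 ≤ z₂ ∧ 0 ≤ β ∧ β ≤ 1 ∧
          1 - ε ≤ ϑ₁ z₁ ∧ 1 - ε ≤ ϑ₂ z₂ ∧
          y = β ^ 2 * φ₁ z₁ + (1 - β ^ 2) * φ₂ z₂} = M :=
  stmt_15_general α a₁ a₂ b₁ b₂ ε hα ha₁ ha hb₁ hb hε₀ ϑ₁ ϑ₂ φ₁ φ₂ hϑ₁ hϑ₂ hφ₁ hφ₂ M hM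
end
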